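/- Let P^0 be a time-homogeneous Markov transition matrix on a finite state space X, let P^ε be a regular perturbation of P^0, and let μ^ε be the unique stationary distribution of P^ε for each small ε > 0. Then, as ε → 0, μ^ε converges to a probability distribution μ^0 on X that is a stationary distribution of P^0. -/
import Mathlib


open scoped Classical
open Filter Topology

namespace Paper

/-- Mood of an agent: content or discontent. -/
inductive Mood where
  | content : Mood
  | discontent : Mood
deriving DecidableEq

/-- The internal state of a single agent: a baseline action, a baseline utility and a mood. -/
structure AgentState (α : Type*) where
  act : α
  util : ℝ
  mood : Mood

variable {n : ℕ} {A : Fin n → Type*} {W : Type*}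

/-- Joint state of all agents. -/
abbrev JState (A : Fin n → Type*) := ∀ i, AgentState (A i)

/-- The baseline (joint) action profile of a joint state. -/
def prof (z : JState A) : ∀ j, A j := fun j => (z j).act

def allContent (z : JState A) : Prop := ∀ i, (z i).mood = Mood.content

def allDiscontent (z : JState A) : Prop := ∀ i, (z i).mood = Mood.discontent

variable [∀ i, Fintype (A i)] [Fintype W]

/-- The network welfare of an action profile under a disturbance. -/
def welfare (U : ∀ i : Fin n, (∀ j, A j) → W → ℝ) (a : ∀ j, A j) (w : W) : ℝ :=
  ∑ i, U i a w

/-- ρ : the smallest real `r` such that `|U i a w₁ − U i a w₂| ≤ r` for all `i`, `a`, `w₁`, `w₂`. -/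
noncomputable def rho (U : ∀ i : Fin n, (∀ j, A j) → W → ℝ) : ℝ :=
  sInf {r : ℝ | ∀ (i : Fin n) (a : ∀ j, A j) (w₁ w₂ : W), |U i a w₁ - U i a w₂| ≤ r}

/-- Interdependence of the n-person game subject to disturbances. -/
def Interdependent (U : ∀ i : Fin n, (∀ j, A j) → W → ℝ) : Prop :=
  ∀ (a : ∀ j, A j) (w : W) (J : Set (Fin n)), J.Nonempty → J ≠ Set.univ →
    ∃ i ∉ J, ∃ a' : ∀ j, A j, (∀ j ∉ J, a' j = a j) ∧
      ∃ w' : W, |U i a' w' - U i a w| > rho U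

/-- Probability that agent `i` in state `zi` plays action `ai`, with experimentation
rate `ε` and constant `c`: a content agent plays its baseline action with probability
`1 − ε^c` and each other action with probability `ε^c/(|A i| − 1)`; a discontent agent
plays each action with probability `1/|A i|`. -/
noncomputable def actProb (c ε : ℝ) {i : Fin n} (zi : AgentState (A i)) (ai : A i) : ℝ :=
  match zi.mood with
  | Mood.content =>
      if ai = zi.act then 1 - ε ^ c else ε ^ c / ((Fintype.card (A i) : ℝ) - 1)
  | Mood.discontent => 1 / (Fintype.card (A i) : ℝ)

/-- Probability that agent `i` moves from state `zi` to state `zi'` after playing action `ai`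
and receiving payoff `u`: a content agent that played its baseline action and received a
payoff within `ρ` of its baseline keeps its state; otherwise the state becomes
`[ai, u, content]` with probability `ε^(1−u)` and `[ai, u, discontent]` with
probability `1 − ε^(1−u)`. -/
noncomputable def updProb (ρ ε : ℝ) {i : Fin n} (zi zi' : AgentState (A i))
    (ai : A i) (u : ℝ) : ℝ :=
  if zi.mood = Mood.content ∧ ai = zi.act ∧ |u - zi.util| ≤ ρ then
    (if zi' = zi then 1 else 0)
  else if zi' = ⟨ai, u, Mood.content⟩ then ε ^ (1 - u)
  else if zi' = ⟨ai, u, Mood.discontent⟩ then 1 - ε ^ (1 - u)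
  else 0

/-- One-step transition probability `P^ε z z'` of the joint learning dynamics, averaging
over the joint action chosen and the i.i.d. disturbance with law `Prw`.
At `ε = 0` this is the unperturbed chain `P^0` (the entrywise limit as `ε → 0`). -/
noncomputable def P (U : ∀ i : Fin n, (∀ j, A j) → W → ℝ) (Prw : W → ℝ) (c : ℝ)
    (ε : ℝ) (z z' : JState A) : ℝ :=
  ∑ a : ∀ j, A j, ∑ w : W,
    (∏ i, actProb c ε (z i) (a i)) * Prw w *
      (∏ i, updProb (rho U) ε (z i) (z' i) (a i) (U i a w))

variable (U : ∀ i : Fin n, (∀ j, A j) → W → ℝ) (Prw : W → ℝ) (c : ℝ)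

/-- One-step transition with positive probability under the perturbed dynamics. -/
def stepPos (x y : JState A) : Prop := ∃ ε ∈ Set.Ioo (0:ℝ) 1, 0 < P U Prw c ε x y

/-- A joint state is valid if each baseline utility lies in the range of the
corresponding utility function. -/
def ValidState (z : JState A) : Prop := ∀ i, ∃ (a : ∀ j, A j) (w : W), U i a w = (z i).util

/-- The joint state space `Z`: joint states reachable with positive probability (in some
positive number of steps) from a joint state in which all agents are discontent. -/
def SSpace : Set (JState A) :=
  {z | ∃ z₀ : JState A, ValidState U z₀ ∧ allDiscontent z₀ ∧
        Relation.TransGen (stepPos U Prw c) z₀ z}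

/-- The set `D` of all-discontent joint states in `Z`. -/
def Dset : Set (JState A) := {z | z ∈ SSpace U Prw c ∧ allDiscontent z}

/-- The set `B i`: states whose baseline utility for agent `i` is aligned with the baseline
action profile for some disturbance and within `ρ` of it for every disturbance. -/
def Bset (i : Fin n) : Set (JState A) :=
  {z | z ∈ SSpace U Prw c ∧ (∃ w : W, (z i).util = U i (prof z) w) ∧
       ∀ w' : W, |(z i).util - U i (prof z) w'| ≤ rho U}

/-- The content classes `C^m`. -/
def Cm : ℕ → Set (JState A)
  | 0 => {z | z ∈ SSpace U Prw c ∧ allContent z ∧ ∀ i, z ∈ Bset U Prw c i}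
  | (m+1) => {z | z ∈ SSpace U Prw c ∧ allContent z ∧
      ∃ J : Fin (m+2) → Finset (Fin n),
        (∀ k, (J k).Nonempty) ∧
        (∀ k l, k ≠ l → Disjoint (J k) (J l)) ∧
        (Finset.univ.biUnion J = Finset.univ) ∧
        (∀ j ∈ J (Fin.last (m+1)), z ∈ Bset U Prw c j) ∧
        ∃ z' ∈ Cm m, ∀ j ∉ J (Fin.last (m+1)),
          z j = z' j ∧ ∀ w' : W, |(z' j).util - U j (prof z) w'| ≤ rho U}

/-- One-step transition with positive probability under the unperturbed chain `P^0`. -/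
def step0 (x y : JState A) : Prop := 0 < P U Prw c 0 x y

/-- Reachability (in zero or more steps) under the unperturbed chain `P^0`. -/
def Reach0 : JState A → JState A → Prop := Relation.ReflTransGen (step0 U Prw c)

/-- A state is recurrent for `P^0` if every state reachable from it can reach it back. -/
def Recurrent0 (x : JState A) : Prop := ∀ y, Reach0 U Prw c x y → Reach0 U Prw c y x

/-- Recurrence classes of the unperturbed chain `P^0` on `Z`. -/
def RecClass (Cl : Set (JState A)) : Prop :=
  ∃ x ∈ SSpace U Prw c, Recurrent0 U Prw c x ∧
    Cl = {y | y ∈ SSpace U Prw c ∧ Reach0 U Prw c x y}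

/- Generic Markov chain notions. -/

/-- `k`-step reachability (through positive-probability transitions) for a kernel `Q`. -/
def MReachN {X : Type*} (Q : X → X → ℝ) : ℕ → X → X → Prop
  | 0 => fun x y => x = y
  | (k+1) => fun x y => ∃ z, 0 < Q x z ∧ MReachN Q k z y

/-- Irreducibility of a kernel on a set of states. -/
def MIrreducibleOn {X : Type*} (Q : X → X → ℝ) (S : Set X) : Prop :=
  ∀ x ∈ S, ∀ y ∈ S, ∃ k, 0 < k ∧ MReachN Q k x y

/-- Aperiodicity of a kernel on a set of states: the return times to each state
have greatest common divisor 1. -/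
def MAperiodicOn {X : Type*} (Q : X → X → ℝ) (S : Set X) : Prop :=
  ∀ x ∈ S, ∀ d : ℕ, (∀ k, 0 < k → MReachN Q k x x → d ∣ k) → d = 1

/-- Reachability for a kernel `Q`. -/
def MReach {X : Type*} (Q : X → X → ℝ) : X → X → Prop :=
  Relation.ReflTransGen (fun x y => 0 < Q x y)

/-- Recurrent state of a kernel. -/
def MRecurrent {X : Type*} (Q : X → X → ℝ) (x : X) : Prop :=
  ∀ y, MReach Q x y → MReach Q y x

/-- Recurrence class of a kernel. -/
def MRecClass {X : Type*} (Q : X → X → ℝ) (Cl : Set X) : Prop :=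
  ∃ x, MRecurrent Q x ∧ Cl = {y | MReach Q x y}

/-- Stationary distribution of a kernel on a finite type. -/
def MStationary {X : Type*} [Fintype X] (Q : X → X → ℝ) (μ : X → ℝ) : Prop :=
  (∀ x, 0 ≤ μ x) ∧ (∑ x, μ x) = 1 ∧ ∀ y, (∑ x, μ x * Q x y) = μ y

/-- Stationary distribution of a kernel supported on a set `S`. -/
def IsStationaryOn {X : Type*} (Q : X → X → ℝ) (S : Set X) (μ : X → ℝ) : Prop :=
  (∀ x, 0 ≤ μ x) ∧ (∀ x ∉ S, μ x = 0) ∧ (∑ᶠ x ∈ S, μ x) = 1 ∧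
    ∀ y ∈ S, (∑ᶠ x ∈ S, μ x * Q x y) = μ y

/-- `r` is the resistance of the transition `x → y` for the family of kernels `Pf ε`:
`0 < lim_{ε→0⁺} ε^{−r} Pf ε x y < ∞`. -/
def FamTransRes {X : Type*} (Pf : ℝ → X → X → ℝ) (x y : X) (r : ℝ) : Prop :=
  ∃ L : ℝ, 0 < L ∧
    Tendsto (fun ε : ℝ => Pf ε x y / ε ^ r) (𝓝[>] (0:ℝ)) (𝓝 L)

/-- `PathRes R x y r`: there is a path (of one or more transitions) from `x` to `y`
whose transitions have resistances (in the sense of `R`) summing to `r`. -/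
inductive PathRes {X : Type*} (R : X → X → ℝ → Prop) : X → X → ℝ → Prop
  | single {x y : X} {r : ℝ} : R x y r → PathRes R x y r
  | cons {x y z : X} {r s : ℝ} : R x y r → PathRes R y z s → PathRes R x z (r + s)

/-- `ClassResIs R S T r` : `r` is the minimum path resistance over paths from a state of
`S` to a state of `T`. -/
def ClassResIs {X : Type*} (R : X → X → ℝ → Prop) (S T : Set X) (r : ℝ) : Prop :=
  (∃ x ∈ S, ∃ y ∈ T, PathRes R x y r) ∧
    ∀ x ∈ S, ∀ y ∈ T, ∀ r', PathRes R x y r' → r ≤ r'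

/-- Resistance of a transition for the learning dynamics. -/
def TransRes (x y : JState A) (r : ℝ) : Prop := FamTransRes (P U Prw c) x y r

/- Trees over recurrence classes and stochastic potential. -/

/-- An `ℓ`-tree over the collection `RC` of recurrence classes, rooted at `root`, encoded by a
parent map: every non-root class has exactly one outgoing edge (to its parent), and following
parents from any class leads to the root. -/
def IsLTree {X : Type*} (RC : Set (Set X)) (root : Set X) (par : Set X → Set X) : Prop :=
  root ∈ RC ∧ par root = root ∧ (∀ Cl ∈ RC, par Cl ∈ RC) ∧
    ∀ Cl ∈ RC, ∃ k : ℕ, par^[k] Cl = root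

/-- Total resistance of a tree: sum over non-root classes of the resistance of the
edge to the parent, where `rfun C₁ C₂` is the resistance between classes `C₁` and `C₂`. -/
noncomputable def treeRes {X : Type*} (RC : Set (Set X)) (rfun : Set X → Set X → ℝ)
    (root : Set X) (par : Set X → Set X) : ℝ :=
  ∑ᶠ Cl ∈ {Cl | Cl ∈ RC ∧ Cl ≠ root}, rfun Cl (par Cl)

/-- Stochastic potential of the recurrence class `root`: minimum total resistance over
trees rooted at `root`. -/
noncomputable def stochPot {X : Type*} (RC : Set (Set X)) (rfun : Set X → Set X → ℝ)
    (root : Set X) : ℝ :=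
  sInf {s | ∃ par, IsLTree RC root par ∧ s = treeRes RC rfun root par}

/- Trees over recurrence classes indexed by `Fin L`. -/

/-- An `ℓ`-tree on vertex set `Fin L` rooted at `root`, encoded by a parent map. -/
def IsLTreeFin {L : ℕ} (root : Fin L) (par : Fin L → Fin L) : Prop :=
  par root = root ∧ ∀ v, ∃ k : ℕ, par^[k] v = root

/-- Total resistance of a tree on `Fin L`. -/
noncomputable def treeResFin {L : ℕ} (r : Fin L → Fin L → ℝ) (root : Fin L)
    (par : Fin L → Fin L) : ℝ :=
  ∑ v ∈ Finset.univ.filter (fun v => v ≠ root), r v (par v)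

/-- Stochastic potential of the recurrence class indexed by `root`. -/
noncomputable def stochPotFin {L : ℕ} (r : Fin L → Fin L → ℝ) (root : Fin L) : ℝ :=
  sInf {s | ∃ par, IsLTreeFin root par ∧ s = treeResFin r root par}

end Paper

namespace Paper

universe u


/-- Asymptotically monomial (or eventually zero) function near `0⁺`. -/
def AM (f : ℝ → ℝ) : Prop :=
  (∀ᶠ ε in 𝓝[>] (0:ℝ), f ε = 0) ∨
  ∃ r L : ℝ, 0 < L ∧ Tendsto (fun ε => f ε / ε ^ r) (𝓝[>] (0:ℝ)) (𝓝 L)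

lemma am_congr {f g : ℝ → ℝ} (h : ∀ᶠ ε in 𝓝[>] (0:ℝ), f ε = g ε) (hf : AM f) : AM g := by
  rcases hf with hf | ⟨r, L, hL, hT⟩
  · exact Or.inl ((h.and hf).mono fun ε ⟨h1, h2⟩ => h1 ▸ h2)
  · exact Or.inr ⟨r, L, hL, hT.congr' (h.mono fun ε he => by rw [he])⟩

lemma am_zero : AM (fun _ => (0:ℝ)) := Or.inl (Filter.Eventually.of_forall fun _ => rfl)

lemma am_const (c : ℝ) (hc : 0 ≤ c) : AM (fun _ => c) := by
  rcases hc.eq_or_lt with h | h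
  · exact Or.inl (Filter.Eventually.of_forall fun _ => h.symm)
  · refine Or.inr ⟨0, c, h, ?_⟩
    have : ∀ ε : ℝ, c / ε ^ (0:ℝ) = c := fun ε => by rw [Real.rpow_zero, div_one]
    simpa [this] using tendsto_const_nhds

lemma eps_pos : ∀ᶠ ε in 𝓝[>] (0:ℝ), 0 < ε := eventually_mem_nhdsWithin

lemma rpow_tendsto_zero {p : ℝ} (hp : 0 < p) :
    Tendsto (fun ε : ℝ => ε ^ p) (𝓝[>] (0:ℝ)) (𝓝 0) := by
  have h : Tendsto (fun ε : ℝ => ε ^ p) (𝓝 (0:ℝ)) (𝓝 ((0:ℝ) ^ p)) :=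
    (Real.continuousAt_rpow_const 0 p (Or.inr hp.le)).tendsto
  rw [Real.zero_rpow hp.ne'] at h
  exact h.mono_left nhdsWithin_le_nhds

private lemma am_add_aux {f g : ℝ → ℝ} {r1 L1 r2 L2 : ℝ} (h1 : 0 < L1) (h2 : 0 < L2)
    (hr : r1 ≤ r2)
    (hf : Tendsto (fun ε => f ε / ε ^ r1) (𝓝[>] (0:ℝ)) (𝓝 L1))
    (hg : Tendsto (fun ε => g ε / ε ^ r2) (𝓝[>] (0:ℝ)) (𝓝 L2)) :
    ∃ r L : ℝ, 0 < L ∧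
      Tendsto (fun ε => (f ε + g ε) / ε ^ r) (𝓝[>] (0:ℝ)) (𝓝 L) := by
  rcases hr.eq_or_lt with h | h
  · subst h
    refine ⟨r1, L1 + L2, by linarith, ?_⟩
    have := hf.add hg
    exact this.congr (fun ε => (add_div _ _ _).symm)
  · refine ⟨r1, L1 + L2 * 0, by linarith, ?_⟩
    have hgr : Tendsto (fun ε => g ε / ε ^ r1) (𝓝[>] (0:ℝ)) (𝓝 (L2 * 0)) := by
      have hT := hg.mul (rpow_tendsto_zero (p := r2 - r1) (by linarith))
      refine hT.congr' (eps_pos.mono fun ε hε => ?_)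
      have hne : (ε : ℝ) ^ r2 ≠ 0 := (Real.rpow_pos_of_pos hε r2).ne'
      rw [Real.rpow_sub hε]
      field_simp
    have := hf.add hgr
    refine this.congr' (eps_pos.mono fun ε hε => ?_)
    simp [add_div]

lemma am_add {f g : ℝ → ℝ} (hf : AM f) (hg : AM g) : AM (fun ε => f ε + g ε) := by
  rcases hf with hf | ⟨r1, L1, hL1, hT1⟩
  · refine am_congr (f := g) (hf.mono fun ε he => by simp [he]) hg
  · rcases hg with hg | ⟨r2, L2, hL2, hT2⟩
    · refine am_congr (f := f) (hg.mono fun ε he => by simp [he])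
        (Or.inr ⟨r1, L1, hL1, hT1⟩)
    · rcases le_total r1 r2 with h | h
      · obtain ⟨r, L, hL, hT⟩ := am_add_aux hL1 hL2 h hT1 hT2
        exact Or.inr ⟨r, L, hL, hT⟩
      · obtain ⟨r, L, hL, hT⟩ := am_add_aux hL2 hL1 h hT2 hT1
        exact Or.inr ⟨r, L, hL, hT.congr fun ε => by rw [add_comm]⟩

lemma am_mul {f g : ℝ → ℝ} (hf : AM f) (hg : AM g) : AM (fun ε => f ε * g ε) := by
  rcases hf with hf | ⟨r1, L1, hL1, hT1⟩
  · exact Or.inl (hf.mono fun ε he => by simp [he])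
  rcases hg with hg | ⟨r2, L2, hL2, hT2⟩
  · exact Or.inl (hg.mono fun ε he => by simp [he])
  refine Or.inr ⟨r1 + r2, L1 * L2, mul_pos hL1 hL2, ?_⟩
  refine (hT1.mul hT2).congr' (eps_pos.mono fun ε hε => ?_)
  show f ε / ε ^ r1 * (g ε / ε ^ r2) = f ε * g ε / ε ^ (r1 + r2)
  rw [Real.rpow_add hε, div_mul_div_comm]

lemma am_div {f g : ℝ → ℝ} (hf : AM f) (hg : AM g)
    (hne : ¬ (∀ᶠ ε in 𝓝[>] (0:ℝ), g ε = 0)) : AM (fun ε => f ε / g ε) := by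
  rcases hg with hg | ⟨r2, L2, hL2, hT2⟩
  · exact absurd hg hne
  have hgpos : ∀ᶠ ε in 𝓝[>] (0:ℝ), 0 < g ε := by
    have h2 := hT2.eventually (eventually_gt_nhds (half_lt_self hL2))
    filter_upwards [h2, eps_pos] with ε h2 hε
    have hp : (0:ℝ) < ε ^ r2 := Real.rpow_pos_of_pos hε r2
    have : 0 < g ε / ε ^ r2 := lt_trans (by positivity) h2
    have := mul_pos this hp
    rwa [div_mul_cancel₀ _ hp.ne'] at this
  rcases hf with hf | ⟨r1, L1, hL1, hT1⟩
  · exact Or.inl (hf.mono fun ε he => by simp [he])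
  refine Or.inr ⟨r1 - r2, L1 / L2, div_pos hL1 hL2, ?_⟩
  refine (hT1.div hT2 hL2.ne').congr' ?_
  filter_upwards [eps_pos, hgpos] with ε hε hg
  have h1 : (0:ℝ) < ε ^ r1 := Real.rpow_pos_of_pos hε r1
  have h2 : (0:ℝ) < ε ^ r2 := Real.rpow_pos_of_pos hε r2
  show f ε / ε ^ r1 / (g ε / ε ^ r2) = f ε / g ε / ε ^ (r1 - r2)
  rw [div_div_div_comm, ← Real.rpow_sub hε]

lemma am_sum {ι : Type*} (s : Finset ι) (f : ι → ℝ → ℝ) (hf : ∀ i ∈ s, AM (f i)) :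
    AM (fun ε => ∑ i ∈ s, f i ε) := by
  classical
  induction s using Finset.induction_on with
  | empty => simpa using am_zero
  | @insert a s' hx ih =>
    have := am_add (hf a (Finset.mem_insert_self a s'))
      (ih fun i hi => hf i (Finset.mem_insert_of_mem hi))
    exact am_congr (Filter.Eventually.of_forall fun ε => by
      rw [Finset.sum_insert hx]) (by simpa using this)

lemma am_tendsto_of_bounded {f : ℝ → ℝ} (hf : AM f)
    (hb : ∀ᶠ ε in 𝓝[>] (0:ℝ), 0 ≤ f ε ∧ f ε ≤ 1) :
    ∃ l : ℝ, Tendsto f (𝓝[>] (0:ℝ)) (𝓝 l) := by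
  rcases hf with hf | ⟨r, L, hL, hT⟩
  · exact ⟨0, tendsto_const_nhds.congr' (hf.mono fun ε he => he.symm)⟩
  rcases lt_trichotomy r 0 with hr | hr | hr
  · exfalso
    have hpow : Tendsto (fun ε : ℝ => ε ^ r) (𝓝[>] (0:ℝ)) atTop := by
      have h0 : Tendsto (fun ε : ℝ => ε ^ (-r)) (𝓝[>] (0:ℝ)) (𝓝[>] (0:ℝ)) := by
        refine tendsto_nhdsWithin_iff.mpr ⟨rpow_tendsto_zero (by linarith), ?_⟩
        exact eps_pos.mono fun ε hε => Real.rpow_pos_of_pos hε _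
      have := h0.inv_tendsto_nhdsGT_zero
      refine this.congr' (eps_pos.mono fun ε hε => ?_)
      simp [Real.rpow_neg hε.le]
    have hfa : Tendsto f (𝓝[>] (0:ℝ)) atTop := by
      have := Tendsto.pos_mul_atTop hL hT hpow
      refine this.congr' (eps_pos.mono fun ε hε => ?_)
      exact div_mul_cancel₀ _ (Real.rpow_pos_of_pos hε r).ne'
    have := (hfa.eventually_gt_atTop 1).and hb
    rcases this.exists with ⟨ε, h1, _, h2⟩
    linarith
  · refine ⟨L, hT.congr' (Filter.Eventually.of_forall fun ε => ?_)⟩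
    rw [hr, Real.rpow_zero, div_one]
  · refine ⟨0, ?_⟩
    have := hT.mul (rpow_tendsto_zero hr)
    rw [mul_zero] at this
    refine this.congr' (eps_pos.mono fun ε hε => ?_)
    exact div_mul_cancel₀ _ (Real.rpow_pos_of_pos hε r).ne'


lemma am_pos_clause {f : ℝ → ℝ} (hf : AM f) (h : ¬ ∀ᶠ ε in 𝓝[>] (0:ℝ), f ε = 0) :
    ∀ᶠ ε in 𝓝[>] (0:ℝ), 0 < f ε := by
  rcases hf with hf | ⟨r, L, hL, hT⟩
  · exact absurd hf h
  have h2 := hT.eventually (eventually_gt_nhds (half_lt_self hL))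
  filter_upwards [h2, eps_pos] with ε h2 hε
  have hp : (0:ℝ) < ε ^ r := Real.rpow_pos_of_pos hε r
  have h3 : 0 < f ε / ε ^ r := lt_trans (by positivity) h2
  have := mul_pos h3 hp
  rwa [div_mul_cancel₀ _ hp.ne'] at this
lemma sum_split {X : Type*} [Fintype X] {M : Type*} [AddCommMonoid M] (s : X) (f : X → M) :
    (∑ x, f x) = f s + ∑ x : {y : X // y ≠ s}, f x.val := by
  classical
  rw [Fintype.sum_eq_add_sum_compl s f]
  congr 1
  exact Finset.sum_subtype (p := fun y => y ≠ s) (s := ({s}ᶜ : Finset X))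
    (fun x => by simp) f

lemma gth (n : ℕ) : ∀ (X : Type u) [Fintype X], Fintype.card X = n + 1 →
    ∀ (Pf : ℝ → X → X → ℝ),
    (∀ᶠ ε in 𝓝[>] (0:ℝ), (∀ x y, 0 ≤ Pf ε x y) ∧ ∀ x, (∑ y, Pf ε x y) = 1) →
    (∀ x y, AM (fun ε => Pf ε x y)) →
    ∃ ν : ℝ → X → ℝ, (∀ x, AM (fun ε => ν ε x)) ∧
      ∀ᶠ ε in 𝓝[>] (0:ℝ), MStationary (Pf ε) (ν ε) := by
  induction n with
  | zero =>
    intro X _ hcard Pf hstoch ham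
    obtain ⟨e, he⟩ := Fintype.card_eq_one_iff.mp hcard
    have huniv : (Finset.univ : Finset X) = {e} :=
      Finset.eq_singleton_iff_unique_mem.mpr ⟨Finset.mem_univ e, fun x _ => he x⟩
    refine ⟨fun _ _ => 1, fun x => am_const 1 zero_le_one, ?_⟩
    filter_upwards [hstoch] with ε hst
    obtain ⟨hnn, hrow⟩ := hst
    refine ⟨fun x => zero_le_one, ?_, ?_⟩
    · rw [huniv]; simp
    · intro y
      have h1 := hrow e
      rw [huniv] at h1 ⊢
      simp only [Finset.sum_singleton] at h1 ⊢
      rw [he y, one_mul, h1]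
  | succ n ih =>
    intro X _ hcard Pf hstoch ham
    have hXpos : 0 < Fintype.card X := by omega
    have hne : Nonempty X := Fintype.card_pos_iff.mp hXpos
    obtain ⟨s⟩ := hne
    set D : ℝ → ℝ := fun ε => ∑ x : {y : X // y ≠ s}, Pf ε s x.val with hD_def
    have hcard' : Fintype.card {y : X // y ≠ s} = n + 1 := by
      have h1 : (Fintype.card X : ℕ) = 1 + Fintype.card {y : X // y ≠ s} := by
        rw [Fintype.card_eq_sum_ones, Fintype.card_eq_sum_ones]
        exact sum_split (M := ℕ) s fun _ => 1
      omega
    have hDam : AM D := am_sum Finset.univ _ (fun i _ => ham s i.val)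
    by_cases hD0 : ∀ᶠ ε in 𝓝[>] (0:ℝ), D ε = 0
    · -- s is eventually absorbing; the point mass at s works
      refine ⟨fun ε x => if x = s then 1 else 0, ?_, ?_⟩
      · intro x
        by_cases hx : x = s
        · have he : (fun _ : ℝ => if x = s then (1:ℝ) else 0) = fun _ => (1:ℝ) := by
            funext ε; rw [if_pos hx]
          rw [he]; exact am_const 1 zero_le_one
        · have he : (fun _ : ℝ => if x = s then (1:ℝ) else 0) = fun _ => (0:ℝ) := by
            funext ε; rw [if_neg hx]
          rw [he]; exact am_zero
      · filter_upwards [hstoch, hD0] with ε hst hD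
        obtain ⟨hnn, hrow⟩ := hst
        have hDe : D ε = ∑ x : {y : X // y ≠ s}, Pf ε s x.val := by simp only [hD_def]
        have hPss : Pf ε s s = 1 := by
          have h1 := hrow s
          rw [sum_split s (fun y => Pf ε s y)] at h1
          linarith
        have hPs0 : ∀ y, y ≠ s → Pf ε s y = 0 := by
          intro y hy
          have hle : Pf ε s y ≤ ∑ x : {y : X // y ≠ s}, Pf ε s x.val := by
            have := Finset.single_le_sum (f := fun x : {y : X // y ≠ s} => Pf ε s x.val)
              (fun i _ => hnn s i.val) (Finset.mem_univ ⟨y, hy⟩)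
            exact this
          have := hnn s y
          linarith
        refine ⟨?_, ?_, ?_⟩
        · intro x; by_cases hx : x = s <;> simp [hx]
        · simp
        · intro y
          have hsum : (∑ x, (if x = s then (1:ℝ) else 0) * Pf ε x y) = Pf ε s y := by
            rw [sum_split s (fun x => (if x = s then (1:ℝ) else 0) * Pf ε x y)]
            have : ∀ x : {y : X // y ≠ s},
                (if x.val = s then (1:ℝ) else 0) * Pf ε x.val y = 0 := by
              intro x; simp [x.prop]
            simp [this]
          rw [hsum]
          by_cases hy : y = s
          · simp [hy, hPss]
          · simp [hy, hPs0 y hy]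
    · -- s is eventually non-absorbing: eliminate s
      have hDpos : ∀ᶠ ε in 𝓝[>] (0:ℝ), 0 < D ε := am_pos_clause hDam hD0
      set P' : ℝ → {y : X // y ≠ s} → {y : X // y ≠ s} → ℝ :=
        fun ε x y => Pf ε x.val y.val + Pf ε x.val s * Pf ε s y.val / D ε with hP'_def
      have ham' : ∀ x y, AM (fun ε => P' ε x y) := fun x y =>
        am_add (ham _ _) (am_div (am_mul (ham _ _) (ham _ _)) hDam hD0)
      have hstoch' : ∀ᶠ ε in 𝓝[>] (0:ℝ),
          (∀ x y, 0 ≤ P' ε x y) ∧ ∀ x, (∑ y, P' ε x y) = 1 := by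
        filter_upwards [hstoch, hDpos] with ε hst hD
        obtain ⟨hnn, hrow⟩ := hst
        constructor
        · intro x y
          have h1 := hnn x.val y.val
          have h2 := hnn x.val s
          have h3 := hnn s y.val
          have : 0 ≤ Pf ε x.val s * Pf ε s y.val / D ε := by positivity
          simp only [hP'_def]
          linarith
        · intro x
          have hsplit : (∑ y : {y : X // y ≠ s}, Pf ε x.val y.val) = 1 - Pf ε x.val s := by
            have h1 := hrow x.val
            rw [sum_split s (fun y => Pf ε x.val y)] at h1
            linarith
          have h2 : (∑ y : {y : X // y ≠ s}, Pf ε x.val s * Pf ε s y.val / D ε)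
              = Pf ε x.val s := by
            rw [← Finset.sum_div, ← Finset.mul_sum]
            rw [show (∑ y : {y : X // y ≠ s}, Pf ε s y.val) = D ε from rfl]
            field_simp
          simp only [hP'_def]
          rw [Finset.sum_add_distrib, hsplit, h2]
          ring
      obtain ⟨ν', hν'am, hν'st⟩ := ih {y : X // y ≠ s} hcard' P' hstoch' ham'
      set w : ℝ → X → ℝ := fun ε x =>
        if h : x = s then (∑ z : {y : X // y ≠ s}, ν' ε z * Pf ε z.val s) / D ε
        else ν' ε ⟨x, h⟩ with hw_def
      set S : ℝ → ℝ := fun ε => ∑ x, w ε x with hS_def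
      have ham_w : ∀ x, AM (fun ε => w ε x) := by
        intro x
        by_cases hx : x = s
        · have : (fun ε => w ε x)
              = fun ε => (∑ z : {y : X // y ≠ s}, ν' ε z * Pf ε z.val s) / D ε := by
            funext ε; simp only [hw_def]; exact dif_pos hx
          rw [this]
          exact am_div (am_sum Finset.univ _ fun z _ => am_mul (hν'am z) (ham z.val s))
            hDam hD0
        · have : (fun ε => w ε x) = fun ε => ν' ε ⟨x, hx⟩ := by
            funext ε; simp only [hw_def]; exact dif_neg hx
          rw [this]
          exact hν'am _
      have ham_S : AM S := am_sum Finset.univ _ fun x _ => ham_w x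
      have hwsub : ∀ ε (x : {y : X // y ≠ s}), w ε x.val = ν' ε x := by
        intro ε x
        simp only [hw_def]
        rw [dif_neg x.prop]
      have hws_eq : ∀ ε' : ℝ,
          w ε' s = (∑ z : {y : X // y ≠ s}, ν' ε' z * Pf ε' z.val s) / D ε' := by
        intro ε'
        simp [hw_def]
      have hSev : ∀ᶠ ε in 𝓝[>] (0:ℝ), S ε = w ε s + 1 ∧ 0 ≤ w ε s := by
        filter_upwards [hν'st, hstoch, hDpos] with ε hst hpf hD
        obtain ⟨hν'nn, hν'sum, _⟩ := hst
        constructor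
        · simp only [hS_def]
          rw [sum_split s (w ε)]
          congr 1
          rw [Finset.sum_congr rfl fun x _ => hwsub ε x]
          exact hν'sum
        · rw [hws_eq ε]
          exact div_nonneg (Finset.sum_nonneg fun z _ =>
            mul_nonneg (hν'nn z) (hpf.1 z.val s)) hD.le
      have hSne : ¬ (∀ᶠ ε in 𝓝[>] (0:ℝ), S ε = 0) := by
        intro h
        obtain ⟨ε, h1, h2, h3⟩ := (h.and hSev).exists
        linarith
      refine ⟨fun ε x => w ε x / S ε, fun x => am_div (ham_w x) ham_S hSne, ?_⟩
      filter_upwards [hν'st, hstoch, hDpos, hSev] with ε hst hpf hD hS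
      obtain ⟨hν'nn, hν'sum, hν'fix⟩ := hst
      obtain ⟨hnn, hrow⟩ := hpf
      obtain ⟨hS1, hws0⟩ := hS
      have hSpos : 0 < S ε := by rw [hS1]; linarith
      have hwnn : ∀ x, 0 ≤ w ε x := by
        intro x
        by_cases hx : x = s
        · rw [hx]; exact hws0
        · simp only [hw_def]; rw [dif_neg hx]; exact hν'nn _
      have hwsD : w ε s * D ε = ∑ z : {y : X // y ≠ s}, ν' ε z * Pf ε z.val s := by
        rw [hws_eq ε, div_mul_cancel₀ _ hD.ne']
      have hPsrow : Pf ε s s + D ε = 1 := by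
        have h1 := hrow s
        rw [sum_split s (fun y => Pf ε s y)] at h1
        simpa using h1
      have hkey : ∀ y : X, (∑ x, w ε x * Pf ε x y) = w ε y := by
        intro y
        rw [sum_split s (fun x => w ε x * Pf ε x y)]
        have hsub : (∑ x : {y : X // y ≠ s}, w ε x.val * Pf ε x.val y)
            = ∑ x : {y : X // y ≠ s}, ν' ε x * Pf ε x.val y :=
          Finset.sum_congr rfl fun x _ => by rw [hwsub ε x]
        rw [hsub]
        by_cases hy : y = s
        · rw [hy, ← hwsD]
          have hss : Pf ε s s = 1 - D ε := by linarith
          rw [hss]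
          ring
        · have hfix := hν'fix ⟨y, hy⟩
          have hexp : (∑ x : {y : X // y ≠ s}, ν' ε x * P' ε x ⟨y, hy⟩)
              = (∑ x : {y : X // y ≠ s}, ν' ε x * Pf ε x.val y) + w ε s * Pf ε s y := by
            simp only [hP'_def]
            have : ∀ x : {z : X // z ≠ s},
                ν' ε x * (Pf ε x.val y + Pf ε x.val s * Pf ε s y / D ε)
                = ν' ε x * Pf ε x.val y + ν' ε x * Pf ε x.val s * (Pf ε s y / D ε) := by
              intro x; ring
            rw [Finset.sum_congr rfl fun x _ => this x, Finset.sum_add_distrib,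
              ← Finset.sum_mul, ← hwsD]
            congr 1
            field_simp
          rw [hexp] at hfix
          have hwy : w ε y = ν' ε ⟨y, hy⟩ := hwsub ε ⟨y, hy⟩
          rw [hwy]
          linarith
      refine ⟨fun x => div_nonneg (hwnn x) hSpos.le, ?_, ?_⟩
      · rw [← Finset.sum_div, div_self hSpos.ne']
      · intro y
        have h1 : (∑ x, w ε x / S ε * Pf ε x y) = (∑ x, w ε x * Pf ε x y) / S ε := by
          rw [Finset.sum_div]
          exact Finset.sum_congr rfl fun x _ => by ring
        rw [h1, hkey y]


/-- Theorem 1, part i, Young 1993: If `Pf ε` is a regular perturbation of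
the transition matrix `P0` on a finite state space, with unique stationary distributions
`μ ε` for small `ε > 0`, then as `ε → 0` the `μ ε` converge to a probability distribution
`μ0` that is a stationary distribution of `P0`. -/
theorem stationary_distributions_converge {X : Type*} [Fintype X] [Nonempty X]
    (Pf : ℝ → X → X → ℝ) (P0 : X → X → ℝ) (ε₀ : ℝ) (hε₀ : 0 < ε₀)
    (hstoch : ∀ ε ∈ Set.Ioo (0:ℝ) ε₀,
        (∀ x y, 0 ≤ Pf ε x y) ∧ ∀ x, (∑ y, Pf ε x y) = 1)
    (hP0 : (∀ x y, 0 ≤ P0 x y) ∧ ∀ x, (∑ y, P0 x y) = 1)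
    (hirr : ∀ ε ∈ Set.Ioo (0:ℝ) ε₀,
        MIrreducibleOn (Pf ε) (Set.univ : Set X) ∧
        MAperiodicOn (Pf ε) (Set.univ : Set X))
    (hlim : ∀ x y : X, Filter.Tendsto (fun ε : ℝ => Pf ε x y) (𝓝[>] (0:ℝ)) (𝓝 (P0 x y)))
    (hres : ∀ x y : X, (∃ ε ∈ Set.Ioo (0:ℝ) ε₀, 0 < Pf ε x y) →
        ∃ r : ℝ, 0 ≤ r ∧ FamTransRes Pf x y r)
    (μ : ℝ → X → ℝ)
    (hμ : ∀ ε ∈ Set.Ioo (0:ℝ) ε₀, MStationary (Pf ε) (μ ε) ∧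
        ∀ ν : X → ℝ, MStationary (Pf ε) ν → ν = μ ε) :
    ∃ μ0 : X → ℝ,
      (∀ x, Filter.Tendsto (fun ε : ℝ => μ ε x) (𝓝[>] (0:ℝ)) (𝓝 (μ0 x))) ∧
      MStationary P0 μ0 := by
  have hIoo : Set.Ioo (0:ℝ) ε₀ ∈ 𝓝[>] (0:ℝ) :=
    Ioo_mem_nhdsGT_of_mem ⟨le_refl 0, hε₀⟩
  have hev_stoch : ∀ᶠ ε in 𝓝[>] (0:ℝ),
      (∀ x y, 0 ≤ Pf ε x y) ∧ ∀ x, (∑ y, Pf ε x y) = 1 :=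
    Filter.eventually_of_mem hIoo hstoch
  have ham : ∀ x y, AM (fun ε => Pf ε x y) := by
    intro x y
    by_cases h : ∃ ε ∈ Set.Ioo (0:ℝ) ε₀, 0 < Pf ε x y
    · obtain ⟨r, _, L, hL, hT⟩ := hres x y h
      exact Or.inr ⟨r, L, hL, hT⟩
    · push_neg at h
      refine Or.inl (Filter.eventually_of_mem hIoo fun ε hε => ?_)
      exact le_antisymm (h ε hε) ((hstoch ε hε).1 x y)
  obtain ⟨n, hn⟩ : ∃ n, Fintype.card X = n + 1 :=
    ⟨Fintype.card X - 1, (Nat.succ_pred_eq_of_pos Fintype.card_pos).symm⟩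
  obtain ⟨ν, hνam, hνst⟩ := gth n X hn Pf hev_stoch ham
  have hμν : ∀ᶠ ε in 𝓝[>] (0:ℝ), μ ε = ν ε := by
    filter_upwards [hνst, Filter.eventually_of_mem hIoo (fun ε hε => hε)] with ε h1 h2
    exact ((hμ ε h2).2 (ν ε) h1).symm
  have hbdd : ∀ x, ∀ᶠ ε in 𝓝[>] (0:ℝ), 0 ≤ ν ε x ∧ ν ε x ≤ 1 := by
    intro x
    filter_upwards [hνst] with ε hst
    obtain ⟨hnn, hsum, _⟩ := hst
    refine ⟨hnn x, ?_⟩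
    have h1 := Finset.single_le_sum (f := fun x => ν ε x)
      (fun i _ => hnn i) (Finset.mem_univ x)
    linarith
  have hconv : ∀ x, ∃ l, Tendsto (fun ε => ν ε x) (𝓝[>] (0:ℝ)) (𝓝 l) :=
    fun x => am_tendsto_of_bounded (hνam x) (hbdd x)
  choose μ0 hμ0 using hconv
  have hμt : ∀ x, Tendsto (fun ε : ℝ => μ ε x) (𝓝[>] (0:ℝ)) (𝓝 (μ0 x)) := by
    intro x
    refine (hμ0 x).congr' (hμν.mono fun ε h => ?_)
    show ν ε x = μ ε x
    rw [h]
  refine ⟨μ0, hμt, ?_, ?_, ?_⟩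
  · intro x
    exact ge_of_tendsto (hμ0 x) ((hbdd x).mono fun ε h => h.1)
  · have hT : Tendsto (fun ε => ∑ x, ν ε x) (𝓝[>] (0:ℝ)) (𝓝 (∑ x, μ0 x)) :=
      tendsto_finset_sum _ (fun x _ => hμ0 x)
    have hT1 : Tendsto (fun ε => ∑ x, ν ε x) (𝓝[>] (0:ℝ)) (𝓝 1) :=
      tendsto_const_nhds.congr' (hνst.mono fun ε h => h.2.1.symm)
    exact tendsto_nhds_unique hT hT1
  · intro y
    have hT : Tendsto (fun ε => ∑ x, ν ε x * Pf ε x y) (𝓝[>] (0:ℝ))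
        (𝓝 (∑ x, μ0 x * P0 x y)) :=
      tendsto_finset_sum _ (fun x _ => (hμ0 x).mul (hlim x y))
    have hT2 : Tendsto (fun ε => ∑ x, ν ε x * Pf ε x y) (𝓝[>] (0:ℝ)) (𝓝 (μ0 y)) :=
      (hμ0 y).congr' (hνst.mono fun ε h => (h.2.2 y).symm)
    exact tendsto_nhds_unique hT hT2


end Paper
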